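/- Let y ≥ 1 be a natural number and define ψ(x, y) = 7x if x ≤ y, 8y − x if y ≤ x ≤ 8y, and 0 if x ≥ 8y. Let X be a finite set of natural numbers contained in [1, 8y − 1] such that for all x₁, x₂ ∈ X with x₁ < x₂ we have 2x₁ ≤ x₂. Then ∑_{x ∈ X} ψ(x, y) ≤ 24y. -/
import Mathlib


noncomputable def psiN (x y : ℕ) : ℝ :=
  if x ≤ y then 7 * x else if x ≤ 8 * y then 8 * (y : ℝ) - (x : ℝ) else 0

noncomputable def fAux (y x : ℕ) : ℝ :=
  if x ≤ y then 14 * x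
  else if x ≤ 2 * y then 6 * x + 8 * y
  else if x ≤ 4 * y then 2 * x + 16 * y
  else 24 * y

lemma fAux_nonneg (y x : ℕ) : 0 ≤ fAux y x := by
  unfold fAux
  split_ifs <;> positivity

lemma fAux_mono (y : ℕ) {a b : ℕ} (hab : a ≤ b) : fAux y a ≤ fAux y b := by
  unfold fAux
  split_ifs <;> (try (exfalso; omega)) <;> (rify at *; linarith)

lemma fAux_le (y m : ℕ) : fAux y m ≤ 24 * y := by
  unfold fAux
  split_ifs <;> (rify at *; linarith)

lemma key (y x q : ℕ) (h1 : 2 * q ≤ x) (h2 : x ≤ 2 * q + 1) :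
    psiN x y + fAux y q ≤ fAux y x := by
  unfold psiN fAux
  split_ifs <;> (try (exfalso; omega)) <;> (rify at *; linarith)

lemma main (y m : ℕ) : ∀ X : Finset ℕ, (∀ x ∈ X, x ≤ m) →
    (∀ x₁ ∈ X, ∀ x₂ ∈ X, x₁ < x₂ → 2 * x₁ ≤ x₂) →
    ∑ x ∈ X, psiN x y ≤ fAux y m := by
  induction m using Nat.strong_induction_on with
  | _ m ih =>
    intro X hXm hd
    rcases X.eq_empty_or_nonempty with rfl | hne
    · simpa using fAux_nonneg y m
    · set M := X.max' hne with hM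
      have hMX : M ∈ X := X.max'_mem hne
      have hMm : M ≤ m := hXm M hMX
      by_cases hM0 : M = 0
      · have hX0 : ∀ x ∈ X, x = 0 := by
          intro x hx
          have := X.le_max' x hx
          omega
        have : ∑ x ∈ X, psiN x y = 0 := by
          apply Finset.sum_eq_zero
          intro x hx
          rw [hX0 x hx]
          simp [psiN]
        rw [this]; exact fAux_nonneg y m
      · have hsmall : ∀ x ∈ X.erase M, x ≤ M / 2 := by
          intro x hx
          have hxX := Finset.mem_of_mem_erase hx
          have hne' := Finset.ne_of_mem_erase hx
          have hlt : x < M := lt_of_le_of_ne (X.le_max' x hxX) hne'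
          have := hd x hxX M hMX hlt
          omega
        have hd' : ∀ x₁ ∈ X.erase M, ∀ x₂ ∈ X.erase M, x₁ < x₂ → 2 * x₁ ≤ x₂ := by
          intro a ha b hb hab
          exact hd a (Finset.mem_of_mem_erase ha) b (Finset.mem_of_mem_erase hb) hab
        have hIH : ∑ x ∈ X.erase M, psiN x y ≤ fAux y (M / 2) :=
          ih (M / 2) (by omega) _ hsmall hd'
        have hsum : ∑ x ∈ X, psiN x y = psiN M y + ∑ x ∈ X.erase M, psiN x y :=
          (Finset.add_sum_erase X _ hMX).symm
        rw [hsum]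
        calc psiN M y + ∑ x ∈ X.erase M, psiN x y
            ≤ psiN M y + fAux y (M / 2) := by linarith
          _ ≤ fAux y M := key y M (M / 2) (by omega) (by omega)
          _ ≤ fAux y m := fAux_mono y hMm

theorem stmt5 (y : ℕ) (hy : 1 ≤ y) (X : Finset ℕ)
    (hX : ∀ x ∈ X, 1 ≤ x ∧ x ≤ 8 * y - 1)
    (hdouble : ∀ x₁ ∈ X, ∀ x₂ ∈ X, x₁ < x₂ → 2 * x₁ ≤ x₂) :
    ∑ x ∈ X, psiN x y ≤ 24 * y := by
  calc ∑ x ∈ X, psiN x y ≤ fAux y (8 * y - 1) :=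
        main y (8 * y - 1) X (fun x hx => (hX x hx).2) hdouble
    _ ≤ 24 * y := fAux_le y _
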